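/- Let D ⊂ ℂⁿ be a bounded convex domain, r > 0, and D_r := D ∩ {z : Re(z_n) < r}. Assume D ⊂ {Re z_n > 0}. Then for every p ∈ D_r and every v ∈ ℂⁿ, K_{D_{2r}}(p, v) ≤ 2 K_D(p, v). -/

import Mathlib

open Set Metric

/-- The Kobayashi infinitesimal pseudometric of a domain `D` in a complex normed space. -/
noncomputable def kobMetric {E : Type*} [NormedAddCommGroup E] [NormedSpace ℂ E]
    (D : Set E) (p v : E) : ℝ :=
  sInf {α : ℝ | 0 < α ∧ ∃ f : ℂ → E, DifferentiableOn ℂ f (ball (0:ℂ) 1) ∧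
    MapsTo f (ball (0:ℂ) 1) D ∧ f 0 = p ∧ fderiv ℂ f 0 1 = α⁻¹ • v}

/-!
For a convex domain the Kobayashi metric is comparable to the reciprocal of the distance to the
boundary along the complex line `p + ℂ v`: a linear disk of radius `d` in that line gives
`K ≤ 1 / d`, while a holomorphic disk through `p` can be pushed by a supporting real hyperplane at
a boundary point of the line into a half-plane, where the Schwarz lemma for half-planes gives
`K ≥ 1 / (2 d)`. Cutting `D` down to `D ∩ {Re z_n < 2r}` does not bring the boundary closer to a
point `p` with `Re p_n < r`: if `p + z v` leaves through the slice `Re z_n = 2r`, then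
`Re (p - z v)_n ≤ 0`, so the point `p - z v`, at the same distance, is already outside `D`.
-/

open Filter Topology Complex ComplexConjugate

theorem norm_sub_lt_norm_add_conj {u w : ℂ} (hu : 0 < u.re) (hw : 0 < w.re) :
    ‖u - w‖ < ‖u + conj w‖ := by
  have hsq : normSq (u - w) < normSq (u + conj w) := by
    simp only [normSq_apply, sub_re, sub_im, add_re, add_im, conj_re, conj_im]
    nlinarith [mul_pos hu hw]
  rw [← Complex.sq_norm, ← Complex.sq_norm] at hsq
  exact lt_of_pow_lt_pow_left₀ 2 (norm_nonneg _) hsq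

theorem norm_deriv_le_two_mul_re {u : ℂ → ℂ} (hu : DifferentiableOn ℂ u (ball 0 1))
    (hre : ∀ ζ ∈ ball (0 : ℂ) 1, 0 < (u ζ).re) : ‖deriv u 0‖ ≤ 2 * (u 0).re := by
  have h0 : (0 : ℂ) ∈ ball (0 : ℂ) 1 := mem_ball_self one_pos
  set u₀ := u 0
  have hu₀ : 0 < u₀.re := hre 0 h0
  have hden : ∀ ζ ∈ ball (0 : ℂ) 1, u ζ + conj u₀ ≠ 0 := fun ζ hζ h => by
    have := congrArg re h
    simp only [add_re, conj_re, zero_re] at this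
    linarith [hre ζ hζ]
  -- the Cayley transform of the half-plane onto the disk, centred at `u₀`
  set g : ℂ → ℂ := fun ζ => (u ζ - u₀) / (u ζ + conj u₀)
  have hg : DifferentiableOn ℂ g (ball 0 1) := (hu.sub_const _).div (hu.add_const _) hden
  have hmaps : MapsTo g (ball 0 1) (closedBall (g 0) 1) := fun ζ hζ => by
    have hlt := norm_sub_lt_norm_add_conj (hre ζ hζ) hu₀
    rw [mem_closedBall, dist_eq_norm]
    simp only [g, u₀, sub_self, zero_div, sub_zero, norm_div]
    exact (div_lt_one ((norm_nonneg _).trans_lt hlt)).2 hlt |>.le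
  have hu' : HasDerivAt u (deriv u 0) 0 :=
    (hu.differentiableAt (isOpen_ball.mem_nhds h0)).hasDerivAt
  have hg' : deriv g 0 = deriv u 0 / (2 * u₀.re : ℝ) := by
    have hgd : HasDerivAt g _ 0 := (hu'.sub_const u₀).div (hu'.add_const (conj u₀)) (hden 0 h0)
    rw [hgd.deriv, show u 0 = u₀ from rfl, sub_self, zero_mul, sub_zero, ← add_conj]
    field_simp [hden 0 h0]
  have hschwarz := Complex.norm_deriv_le_div_of_mapsTo_ball hg hmaps one_pos
  rwa [hg', norm_div, norm_real, Real.norm_of_nonneg (by positivity), div_one,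
    div_le_one (by positivity)] at hschwarz

section

variable {E : Type*} [NormedAddCommGroup E] [NormedSpace ℂ E]

theorem one_le_two_mul_norm_of_add_smul_fderiv_notMem {D : Set E} (hconv : Convex ℝ D)
    (hopen : IsOpen D) {f : ℂ → E} (hf : DifferentiableOn ℂ f (ball 0 1))
    (hmaps : MapsTo f (ball 0 1) D) {c : ℂ} (hc : f 0 + c • fderiv ℂ f 0 1 ∉ D) :
    1 ≤ 2 * ‖c‖ := by
  have h0 : (0 : ℂ) ∈ ball (0 : ℂ) 1 := mem_ball_self one_pos
  obtain ⟨ℓ, hℓ⟩ := geometric_hahn_banach_open_point hconv hopen hc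
  set L : StrongDual ℂ E := StrongDual.extendRCLike ℓ
  have hL : ∀ x, (L x).re = ℓ x := fun x => StrongDual.re_extendRCLike_apply (𝕜 := ℂ) ℓ x
  set w := fderiv ℂ f 0 1
  set u : ℂ → ℂ := fun ζ => L (f 0 + c • w) - L (f ζ)
  have hu : DifferentiableOn ℂ u (ball 0 1) :=
    (differentiableOn_const _).sub (L.differentiable.comp_differentiableOn hf)
  have hu_re : ∀ ζ ∈ ball (0 : ℂ) 1, 0 < (u ζ).re := fun ζ hζ => by
    simpa only [u, sub_re, hL, sub_pos] using hℓ _ (hmaps hζ)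
  have hu_deriv : deriv u 0 = -L w := by
    have hf' := (hf.differentiableAt (isOpen_ball.mem_nhds h0)).hasFDerivAt
    exact ((L.hasFDerivAt.comp 0 hf').hasDerivAt.const_sub _).deriv
  have hu_zero : u 0 = c * L w := by simp [u, map_add, map_smul]
  have hbound := norm_deriv_le_two_mul_re hu hu_re
  have hpos := hu_re 0 h0
  rw [hu_deriv, hu_zero, norm_neg] at hbound
  rw [hu_zero] at hpos
  have hre_le : (c * L w).re ≤ ‖c‖ * ‖L w‖ := (re_le_norm _).trans (norm_mul _ _).le
  have hLw : 0 < ‖L w‖ := pos_of_mul_pos_right (hpos.trans_le hre_le) (norm_nonneg c)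
  nlinarith

/-- The candidate values `α` in the infimum defining `kobMetric D p v`. -/
def kobCompetitors (D : Set E) (p v : E) : Set ℝ :=
  {α : ℝ | 0 < α ∧ ∃ f : ℂ → E, DifferentiableOn ℂ f (ball (0:ℂ) 1) ∧
    MapsTo f (ball (0:ℂ) 1) D ∧ f 0 = p ∧ fderiv ℂ f 0 1 = α⁻¹ • v}

theorem kobMetric_eq_sInf (D : Set E) (p v : E) :
    kobMetric D p v = sInf (kobCompetitors D p v) := rfl

theorem inv_le_two_mul_norm_of_mem_kobCompetitors {D : Set E} (hconv : Convex ℝ D)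
    (hopen : IsOpen D) {p v : E} {α : ℝ} (hα : α ∈ kobCompetitors D p v) {μ : ℂ}
    (hμ : p + μ • v ∉ D) : α⁻¹ ≤ 2 * ‖μ‖ := by
  obtain ⟨hα, f, hf, hmaps, hf0, hder⟩ := hα
  have hc : f 0 + ((α : ℂ) * μ) • fderiv ℂ f 0 1 ∉ D := by
    rwa [hf0, hder, ← Complex.coe_smul, smul_smul, Complex.ofReal_inv, mul_right_comm,
      mul_inv_cancel₀ (by exact_mod_cast hα.ne'), one_mul]
  have := one_le_two_mul_norm_of_add_smul_fderiv_notMem hconv hopen hf hmaps hc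
  rw [norm_mul, norm_real, Real.norm_of_nonneg hα.le] at this
  rw [inv_le_iff_one_le_mul₀ hα]
  linarith

theorem inv_mem_kobCompetitors {U : Set E} {p v : E} {d : ℝ} (hd : 0 < d)
    (hU : ∀ z : ℂ, ‖z‖ < d → p + z • v ∈ U) : d⁻¹ ∈ kobCompetitors U p v := by
  have hf : ∀ ζ, HasDerivAt (fun ζ : ℂ => p + (ζ * d) • v) ((d : ℂ) • v) ζ := fun ζ => by
    simpa using (((hasDerivAt_id ζ).mul_const (d : ℂ)).smul_const v).const_add p
  refine ⟨inv_pos.2 hd, fun ζ => p + (ζ * d) • v, fun ζ _ => (hf ζ).differentiableAt.differentiableWithinAt,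
    fun ζ hζ => hU _ ?_, by simp, ?_⟩
  · rw [mem_ball_zero_iff] at hζ
    rw [norm_mul, norm_real, Real.norm_of_nonneg hd.le]
    nlinarith
  · rw [(hf 0).hasFDerivAt.fderiv, inv_inv]
    simp [Complex.coe_smul]

theorem kobMetric_le_inv {U : Set E} {p v : E} {d : ℝ} (hd : 0 < d)
    (hU : ∀ z : ℂ, ‖z‖ < d → p + z • v ∈ U) : kobMetric U p v ≤ d⁻¹ :=
  csInf_le ⟨0, fun _ hα => hα.1.le⟩ (inv_mem_kobCompetitors hd hU)

theorem kobCompetitors_nonempty {U : Set E} {p : E} (hU : U ∈ 𝓝 p) (v : E) :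
    (kobCompetitors U p v).Nonempty := by
  have hline : Tendsto (fun z : ℂ => p + z • v) (𝓝 0) (𝓝 p) := by
    simpa using (Continuous.tendsto (by fun_prop : Continuous fun z : ℂ => p + z • v) 0)
  obtain ⟨d, hd, hball⟩ := Metric.mem_nhds_iff.1 (hline hU)
  exact ⟨_, inv_mem_kobCompetitors hd fun z hz => hball (mem_ball_zero_iff.2 hz)⟩

theorem kobMetric_le_two_mul_of_convex {D U : Set E} (hconv : Convex ℝ D) (hopen : IsOpen D)
    {p v : E} (hp : p ∈ D)
    (hUD : ∀ z : ℂ, p + z • v ∉ U → ∃ μ : ℂ, p + μ • v ∉ D ∧ ‖μ‖ ≤ ‖z‖) :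
    kobMetric U p v ≤ 2 * kobMetric D p v := by
  rw [kobMetric_eq_sInf D, ← div_le_iff₀' two_pos]
  refine le_csInf (kobCompetitors_nonempty (hopen.mem_nhds hp) v) fun α hα => ?_
  have hα0 := hα.1
  rw [div_le_iff₀' two_pos, ← inv_inv (2 * α)]
  refine kobMetric_le_inv (by positivity) fun z hz => ?_
  by_contra hzU
  obtain ⟨μ, hμ, hμz⟩ := hUD z hzU
  have := inv_le_two_mul_norm_of_mem_kobCompetitors hconv hopen hα hμ
  rw [mul_inv] at hz
  linarith

theorem exists_notMem_of_notMem_inter_re_lt {D : Set E} (φ : E →ₗ[ℂ] ℂ)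
    (hD : D ⊆ {x | 0 < (φ x).re}) {p v : E} {s : ℝ} (hps : 2 * (φ p).re ≤ s) {z : ℂ}
    (hz : p + z • v ∉ D ∩ {x | (φ x).re < s}) : ∃ μ : ℂ, p + μ • v ∉ D ∧ ‖μ‖ ≤ ‖z‖ := by
  by_cases hzD : p + z • v ∈ D
  · -- reflecting through `p` crosses the hyperplane `Re φ = 0`
    refine ⟨-z, fun hmem => ?_, (norm_neg z).le⟩
    have h₁ := hD hmem
    have h₂ : s ≤ (φ (p + z • v)).re := not_lt.1 fun h => hz ⟨hzD, h⟩
    simp only [mem_ofPred_eq, map_add, map_smul, smul_eq_mul, add_re, neg_mul, neg_re] at h₁ h₂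
    linarith
  · exact ⟨z, hzD, le_rfl⟩

end

theorem kobayashi_doubling_general
    (n : ℕ) (D : Set (EuclideanSpace ℂ (Fin (n + 1))))
    (hconv : Convex ℝ D) (hopen : IsOpen D)
    (hhalf : D ⊆ {z : EuclideanSpace ℂ (Fin (n + 1)) | 0 < (z (Fin.last n)).re})
    (r : ℝ)
    (p : EuclideanSpace ℂ (Fin (n + 1)))
    (hp : p ∈ D ∩ {z : EuclideanSpace ℂ (Fin (n + 1)) | (z (Fin.last n)).re < r})
    (v : EuclideanSpace ℂ (Fin (n + 1))) :
    kobMetric (D ∩ {z : EuclideanSpace ℂ (Fin (n + 1)) | (z (Fin.last n)).re < 2 * r}) p v ≤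
      2 * kobMetric D p v := by
  have hpr : 2 * (p (Fin.last n)).re ≤ 2 * r := by linarith [hp.2.out]
  exact kobMetric_le_two_mul_of_convex hconv hopen hp.1 fun z hz =>
    exists_notMem_of_notMem_inter_re_lt (PiLp.projₗ 2 _ (Fin.last n)) hhalf hpr hz

/-- doubling lemma: `D ⊆ ℂⁿ` bounded convex domain contained in `{Re z_n > 0}`,
`D_s := D ∩ {Re z_n < s}`. Then for every `p ∈ D_r` and every `v`,
`K_{D_{2r}}(p, v) ≤ 2 K_D(p, v)`. -/
theorem kobayashi_doubling
    (n : ℕ) (D : Set (EuclideanSpace ℂ (Fin (n + 1))))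
    (hconv : Convex ℝ D) (hopen : IsOpen D) (hbdd : Bornology.IsBounded D)
    (hhalf : D ⊆ {z : EuclideanSpace ℂ (Fin (n + 1)) | 0 < (z (Fin.last n)).re})
    (r : ℝ) (hr : 0 < r)
    (p : EuclideanSpace ℂ (Fin (n + 1)))
    (hp : p ∈ D ∩ {z : EuclideanSpace ℂ (Fin (n + 1)) | (z (Fin.last n)).re < r})
    (v : EuclideanSpace ℂ (Fin (n + 1))) :
    kobMetric (D ∩ {z : EuclideanSpace ℂ (Fin (n + 1)) | (z (Fin.last n)).re < 2 * r}) p v ≤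
      2 * kobMetric D p v :=
  kobayashi_doubling_general n D hconv hopen hhalf r p hp v
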